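/- Let q, a, x ∈ ℂ with 0 < |q| < 1, x ≠ 0, and let k, n ∈ ℕ with k ≤ n and 1 - a q^j x ≠ 0 for all 0 ≤ j ≤ n + k - 1. Then the k-th iterate of the q-differential operator applied to the function t ↦ t^n/(a t;q)_n, evaluated at x, equals ((q;q)_n/(a x;q)_n) · ∑_{i=0}^{k} [k choose i]_q · (q^n;q)_{k-i} (a x;q)_i a^{k-i} x^{n-i} / ((q;q)_{n-i} (a q^n x;q)_k). -/

import Mathlib

noncomputable def qPoch (q a : ℂ) (n : ℕ) : ℂ :=
  ∏ j ∈ Finset.range n, (1 - a * q ^ j)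

noncomputable def qBinom (q : ℂ) (n k : ℕ) : ℂ :=
  qPoch q q n / (qPoch q q k * qPoch q q (n - k))

noncomputable def Dq (q : ℂ) (f : ℂ → ℂ) : ℂ → ℂ :=
  fun x => (f x - f (q * x)) / x

/-!
The `k`-th power of `D_q` obeys a `q`-Leibniz rule,
`D_q^k (f g)(x) = ∑ᵢ [k choose i]_q (D_q^i f)(x) (D_q^{k-i} g)(qⁱ x)`,
which follows by induction from the `q`-Pascal rule. Applied to `f t = tⁿ` and
`g t = 1/(a t;q)ₙ`, whose iterated `q`-derivatives are
`D_q^i tⁿ = (q;q)ₙ/(q;q)_{n-i} x^{n-i}` and `D_q^m g = a^m (qⁿ;q)_m/(a x;q)_{n+m}`,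
it gives the formula after splitting `(a qⁱ x;q)_{n+k-i} = (a x;q)ₙ (a qⁿ x;q)_k/(a x;q)ᵢ`.
-/

open Finset Function

section qPoch

variable (q a : ℂ)

@[simp]
lemma qPoch_zero : qPoch q a 0 = 1 := prod_range_zero _

lemma qPoch_succ (n : ℕ) : qPoch q a (n + 1) = qPoch q a n * (1 - a * q ^ n) :=
  prod_range_succ _ _

lemma qPoch_succ' (n : ℕ) : qPoch q a (n + 1) = (1 - a) * qPoch q (a * q) n := by
  rw [qPoch, prod_range_succ', mul_comm, pow_zero, mul_one]
  exact congrArg _ (prod_congr rfl fun j _ => by ring)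

lemma qPoch_add (m n : ℕ) : qPoch q a (m + n) = qPoch q a m * qPoch q (a * q ^ m) n := by
  rw [qPoch, prod_range_add]
  exact congrArg _ (prod_congr rfl fun j _ => by ring)

lemma qPoch_ne_zero_of_le {m n : ℕ} (hmn : m ≤ n) (h : qPoch q a n ≠ 0) :
    qPoch q a m ≠ 0 := by
  obtain ⟨d, rfl⟩ := Nat.exists_eq_add_of_le hmn
  exact left_ne_zero_of_mul (qPoch_add q a m d ▸ h)

lemma qPoch_self_ne_zero {q : ℂ} (hq : ‖q‖ < 1) (n : ℕ) : qPoch q q n ≠ 0 := by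
  refine prod_ne_zero_iff.2 fun j _ => sub_ne_zero.2 fun h => ?_
  have : ‖q ^ (j + 1)‖ < 1 := by
    rw [norm_pow]
    exact pow_lt_one₀ (norm_nonneg q) hq j.succ_ne_zero
  rw [pow_succ', ← h, norm_one] at this
  exact this.false

lemma inv_qPoch_sub_inv_qPoch {q b : ℂ} {n : ℕ} (h : qPoch q b (n + 1) ≠ 0) :
    (qPoch q b n)⁻¹ - (qPoch q (b * q) n)⁻¹ = b * (1 - q ^ n) / qPoch q b (n + 1) := by
  have hsucc := qPoch_succ q b n
  have hsucc' := qPoch_succ' q b n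
  have h₁ : qPoch q b n ≠ 0 := left_ne_zero_of_mul (hsucc ▸ h)
  have h₂ : qPoch q (b * q) n ≠ 0 := right_ne_zero_of_mul (hsucc' ▸ h)
  rw [inv_sub_inv h₁ h₂, div_eq_div_iff (mul_ne_zero h₁ h₂) h]
  linear_combination qPoch q (b * q) n * hsucc - qPoch q b n * hsucc'

end qPoch

section qBinom

variable {q : ℂ}

lemma qBinom_zero_right (n : ℕ) (h : qPoch q q n ≠ 0) : qBinom q n 0 = 1 := by
  rw [qBinom, qPoch_zero, Nat.sub_zero, one_mul, div_self h]

lemma qBinom_self (n : ℕ) (h : qPoch q q n ≠ 0) : qBinom q n n = 1 := by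
  rw [qBinom, Nat.sub_self, qPoch_zero, mul_one, div_self h]

lemma qBinom_succ_succ {k i : ℕ} (hik : i < k) (h : qPoch q q (k + 1) ≠ 0) :
    qBinom q (k + 1) (i + 1) = q ^ (i + 1) * qBinom q k (i + 1) + qBinom q k i := by
  obtain ⟨m, rfl⟩ : ∃ m, k = i + m + 1 := ⟨k - i - 1, by omega⟩
  have hi := qPoch_ne_zero_of_le q q (show i + 1 ≤ i + m + 1 + 1 by omega) h
  have hm := qPoch_ne_zero_of_le q q (show m + 1 ≤ i + m + 1 + 1 by omega) h
  rw [qBinom, qBinom, qBinom, show i + m + 1 + 1 - (i + 1) = m + 1 by omega,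
    show i + m + 1 - (i + 1) = m by omega, show i + m + 1 - i = m + 1 by omega]
  rw [qPoch_succ q q i] at hi
  rw [qPoch_succ q q m] at hm
  rw [qPoch_succ q q (i + m + 1), qPoch_succ q q i, qPoch_succ q q m]
  obtain ⟨hi₁, hi₂⟩ := mul_ne_zero_iff.1 hi
  obtain ⟨hm₁, hm₂⟩ := mul_ne_zero_iff.1 hm
  field_simp
  ring

lemma sum_qBinom_succ_mul {k : ℕ} (h : qPoch q q (k + 1) ≠ 0) (T : ℕ → ℂ) :
    ∑ i ∈ range (k + 1 + 1), qBinom q (k + 1) i * T i =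
      ∑ i ∈ range (k + 1), qBinom q k i * (q ^ i * T i + T (i + 1)) := by
  have hk := qPoch_ne_zero_of_le q q k.le_succ h
  simp only [mul_add, sum_add_distrib, ← mul_assoc, mul_comm (qBinom q k _) (q ^ _)]
  rw [sum_range_succ', sum_range_succ, sum_range_succ', sum_range_succ (fun i => _ * T (i + 1)),
    sum_congr rfl fun i hi => by rw [qBinom_succ_succ (mem_range.1 hi) h]]
  simp only [add_mul, sum_add_distrib, qBinom_zero_right _ h, qBinom_zero_right _ hk,
    qBinom_self _ h, qBinom_self _ hk]
  ring

end qBinom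

section Dq

variable (q : ℂ)

lemma mul_Dq_apply (f : ℂ → ℂ) (x : ℂ) : x * Dq q f x = f x - f (q * x) := by
  rcases eq_or_ne x 0 with rfl | hx
  · simp
  · exact mul_div_cancel₀ _ hx

lemma mul_Dq_iterate_succ_apply (f : ℂ → ℂ) (i : ℕ) (x : ℂ) :
    x * (Dq q)^[i + 1] f x = (Dq q)^[i] f x - (Dq q)^[i] f (q * x) := by
  rw [iterate_succ_apply', mul_Dq_apply]

lemma Dq_iterate_succ_apply_zero (f : ℂ → ℂ) (i : ℕ) : (Dq q)^[i + 1] f 0 = 0 := by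
  rw [iterate_succ_apply', Dq, div_zero]

variable {q}

lemma Dq_iterate_pow (hq : q ≠ 0) (m i : ℕ) {x : ℂ} (hx : x ≠ 0) :
    (Dq q)^[i] (fun t => t ^ (m + i)) x = qPoch q (q ^ (m + 1)) i * x ^ m := by
  induction i generalizing m x with
  | zero => simp
  | succ i ih =>
    apply mul_left_cancel₀ hx
    rw [mul_Dq_iterate_succ_apply, show m + (i + 1) = m + 1 + i by omega, ih _ hx,
      ih _ (mul_ne_zero hq hx), qPoch_succ', ← pow_succ]
    ring

lemma Dq_iterate_pow_of_le (hq : q ≠ 0) {i n : ℕ} (hin : i ≤ n) (h : qPoch q q (n - i) ≠ 0)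
    {x : ℂ} (hx : x ≠ 0) :
    (Dq q)^[i] (fun t => t ^ n) x = qPoch q q n / qPoch q q (n - i) * x ^ (n - i) := by
  have hpow := Dq_iterate_pow hq (n - i) i hx
  rw [Nat.sub_add_cancel hin] at hpow
  have hsplit : qPoch q q n = qPoch q q (n - i) * qPoch q (q ^ (n - i + 1)) i := by
    rw [pow_succ', ← qPoch_add, Nat.sub_add_cancel hin]
  rw [hpow, hsplit, mul_div_cancel_left₀ _ h]

lemma Dq_iterate_inv_qPoch (hq : q ≠ 0) (a : ℂ) (n m : ℕ) {x : ℂ} (hx : x ≠ 0)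
    (h : qPoch q (a * x) (n + m) ≠ 0) :
    (Dq q)^[m] (fun t => (qPoch q (a * t) n)⁻¹) x =
      a ^ m * qPoch q (q ^ n) m / qPoch q (a * x) (n + m) := by
  induction m generalizing x with
  | zero => simp
  | succ m ih =>
    have hx' : qPoch q (a * x) (n + m) ≠ 0 := qPoch_ne_zero_of_le _ _ (by omega) h
    have hqx' : qPoch q (a * (q * x)) (n + m) ≠ 0 := by
      rw [show a * (q * x) = a * x * q by ring]
      exact right_ne_zero_of_mul (qPoch_succ' q (a * x) (n + m) ▸ h)
    apply mul_left_cancel₀ hx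
    rw [← add_assoc] at h ⊢
    rw [mul_Dq_iterate_succ_apply, ih hx hx', ih (mul_ne_zero hq hx) hqx',
      show a * (q * x) = a * x * q by ring, div_eq_mul_inv _ (qPoch q (a * x) _),
      div_eq_mul_inv _ (qPoch q (a * x * q) _), ← mul_sub, inv_qPoch_sub_inv_qPoch h,
      qPoch_succ q (q ^ n) m]
    ring

lemma Dq_iterate_mul {k : ℕ} (hk : qPoch q q k ≠ 0) (f g : ℂ → ℂ) (x : ℂ) :
    (Dq q)^[k] (f * g) x =
      ∑ i ∈ range (k + 1), qBinom q k i * (Dq q)^[i] f x * (Dq q)^[k - i] g (q ^ i * x) := by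
  induction k generalizing x with
  | zero => simp [qBinom]
  | succ k ih =>
    have hk' := qPoch_ne_zero_of_le q q k.le_succ hk
    rcases eq_or_ne x 0 with rfl | hx
    · refine (Dq_iterate_succ_apply_zero q _ k).trans (sum_eq_zero fun i _ => ?_).symm
      rcases i with _ | i
      · simp only [Nat.sub_zero, mul_zero, Dq_iterate_succ_apply_zero]
      · simp only [Dq_iterate_succ_apply_zero, mul_zero, zero_mul]
    have pascal := sum_qBinom_succ_mul hk fun i => (Dq q)^[i] f x * (Dq q)^[k + 1 - i] g (q ^ i * x)
    simp only [← mul_assoc] at pascal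
    apply mul_left_cancel₀ hx
    rw [mul_Dq_iterate_succ_apply, ih hk' x, ih hk' (q * x), pascal, mul_sum, ← sum_sub_distrib]
    refine sum_congr rfl fun i hi => ?_
    have hf := mul_Dq_iterate_succ_apply q f i x
    have hg := mul_Dq_iterate_succ_apply q g (k - i) (q ^ i * x)
    rw [show k + 1 - i = k - i + 1 by have := mem_range.1 hi; omega, Nat.add_sub_add_right,
      show q ^ i * (q * x) = q * (q ^ i * x) by ring,
      show q ^ (i + 1) * x = q * (q ^ i * x) by ring]
    linear_combination (-qBinom q k i * (Dq q)^[k - i] g (q * (q ^ i * x))) * hf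
      - qBinom q k i * (Dq q)^[i] f x * hg

end Dq

theorem stmt2 (q a x : ℂ) (hq0 : 0 < ‖q‖) (hq1 : ‖q‖ < 1)
    (hx : x ≠ 0) (k n : ℕ) (hkn : k ≤ n)
    (h : ∀ j : ℕ, j < n + k → 1 - a * q ^ j * x ≠ 0) :
    (Dq q)^[k] (fun t => t ^ n / qPoch q (a * t) n) x =
      qPoch q q n / qPoch q (a * x) n *
        ∑ i ∈ Finset.range (k + 1),
          qBinom q k i *
            (qPoch q (q ^ n) (k - i) * qPoch q (a * x) i * a ^ (k - i) * x ^ (n - i)) /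
            (qPoch q q (n - i) * qPoch q (a * q ^ n * x) k) := by
  have hq : q ≠ 0 := norm_pos_iff.1 hq0
  have hP : qPoch q (a * x) (n + k) ≠ 0 :=
    prod_ne_zero_iff.2 fun j hj => by simpa only [mul_right_comm] using h j (mem_range.1 hj)
  have hsplit_n : qPoch q (a * x) (n + k) = qPoch q (a * x) n * qPoch q (a * q ^ n * x) k := by
    rw [qPoch_add, mul_right_comm]
  rw [show (fun t => t ^ n / qPoch q (a * t) n) =
      (fun t => t ^ n) * fun t => (qPoch q (a * t) n)⁻¹ from funext fun t => div_eq_mul_inv _ _,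
    Dq_iterate_mul (qPoch_self_ne_zero hq1 k), mul_sum]
  refine sum_congr rfl fun i hi => ?_
  have hik : i ≤ k := Nat.lt_succ_iff.1 (mem_range.1 hi)
  have hsplit_i :
      qPoch q (a * x) (n + k) = qPoch q (a * x) i * qPoch q (a * (q ^ i * x)) (n + (k - i)) := by
    rw [← mul_assoc, mul_right_comm, ← qPoch_add]
    congr 1
    omega
  have hR : (qPoch q (a * (q ^ i * x)) (n + (k - i)))⁻¹ =
      qPoch q (a * x) i / (qPoch q (a * x) n * qPoch q (a * q ^ n * x) k) := by
    rw [← hsplit_n, hsplit_i, div_mul_cancel_left₀ (left_ne_zero_of_mul (hsplit_i ▸ hP))]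
  rw [Dq_iterate_pow_of_le hq (hik.trans hkn) (qPoch_self_ne_zero hq1 _) hx,
    Dq_iterate_inv_qPoch hq a n (k - i) (mul_ne_zero (pow_ne_zero i hq) hx)
      (right_ne_zero_of_mul (hsplit_i ▸ hP)), div_eq_mul_inv _ (qPoch q (a * (q ^ i * x)) _), hR]
  have := qPoch_self_ne_zero hq1 (n - i)
  field_simp
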